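/- Let p ≥ 5 be a prime and n a positive integer, and let X_1, …, X_p ⊆ 𝔽_p^n be such that every cycle (x_1, …, x_p) ∈ X_1 × ⋯ × X_p satisfies x_1 = x_2. Then for any two distinct 3-extendable pairs (y, z), (y', z') ∈ X_1 × X_3, one has y + z ≠ y' + z'. -/

import Mathlib

/-!
Take a cycle `x` through `(y, z)` and overwrite its first and third entries by `y'` and `z'`.
Since `y + z = y' + z'` the result is still a cycle, and its second entry is still `x₂`.
Applying the hypothesis to both cycles gives `y = x₂ = y'`, hence also `z = z'`.
-/

open Function Finset

section Cycles

variable {ι G : Type*} [Fintype ι] [DecidableEq ι] [AddCommGroup G]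

theorem sum_update_eq_sub_add (x : ι → G) (i : ι) (a : G) :
    ∑ l, update x i a l = ∑ l, x l - x i + a := by
  rw [sum_update_of_mem (mem_univ i), sum_eq_add_sum_sdiff_singleton_of_mem (mem_univ i) x]
  abel

theorem sum_update_update_of_add_eq {x : ι → G} {i k : ι} (hik : i ≠ k) {a b : G}
    (hab : a + b = x i + x k) : ∑ l, update (update x i a) k b l = ∑ l, x l := by
  rw [sum_update_eq_sub_add, sum_update_eq_sub_add, update_of_ne hik.symm]
  calc ∑ l, x l - x i + a - x k + b = ∑ l, x l + ((a + b) - (x i + x k)) := by abel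
    _ = ∑ l, x l := by rw [hab, sub_self, add_zero]

theorem eq_of_add_eq_of_forall_cycle_apply_eq (X : ι → Set G) {i j k : ι}
    (hji : j ≠ i) (hjk : j ≠ k) (hik : i ≠ k)
    (hX : ∀ x : ι → G, (∀ l, x l ∈ X l) → ∑ l, x l = 0 → x i = x j)
    {x : ι → G} (hx : ∀ l, x l ∈ X l) (hsum : ∑ l, x l = 0)
    {a b : G} (ha : a ∈ X i) (hb : b ∈ X k) (hab : a + b = x i + x k) :
    a = x i ∧ b = x k := by
  set w := update (update x i a) k b
  have hw : ∀ l, w l ∈ X l := by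
    intro l
    rcases eq_or_ne l k with rfl | hlk
    · simpa [w] using hb
    rcases eq_or_ne l i with rfl | hli
    · simpa [w, update_of_ne hlk] using ha
    · simpa [w, update_of_ne hlk, update_of_ne hli] using hx l
  have hwsum : ∑ l, w l = 0 := (sum_update_update_of_add_eq hik hab).trans hsum
  have hwi : w i = a := by simp [w, update_of_ne hik]
  have hwj : w j = x j := by simp [w, update_of_ne hjk, update_of_ne hji]
  have hai : a = x i := by rw [← hwi, hX w hw hwsum, hwj, hX x hx hsum]
  exact ⟨hai, add_left_cancel (hai ▸ hab)⟩

end Cycles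

/-- Suppose `X_1, …, X_p ⊆ 𝔽_p^n` are such that every cycle (p-tuple summing to zero)
`(x_1, …, x_p) ∈ X_1 × ⋯ × X_p` satisfies `x_1 = x_2`. Then any two distinct
`3`-extendable pairs `(y,z), (y',z') ∈ X_1 × X_3` satisfy `y + z ≠ y' + z'`.
Here `(y,z)` is `3`-extendable if there is a cycle `(x_1, …, x_p) ∈ X_1 × ⋯ × X_p`
with `x_1 = y` and `x_3 = z`. -/
theorem stmt9 {p n : ℕ} (hp5 : 5 ≤ p)
    (X : Fin p → Set (Fin n → ZMod p))
    (hX : ∀ x : Fin p → (Fin n → ZMod p), (∀ i, x i ∈ X i) → ∑ i, x i = 0 →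
      x ⟨0, by omega⟩ = x ⟨1, by omega⟩)
    (y z y' z' : Fin n → ZMod p)
    (hyz : y ∈ X ⟨0, by omega⟩ ∧ z ∈ X ⟨2, by omega⟩ ∧
      ∃ x : Fin p → (Fin n → ZMod p), (∀ i, x i ∈ X i) ∧ ∑ i, x i = 0 ∧
        x ⟨0, by omega⟩ = y ∧ x ⟨2, by omega⟩ = z)
    (hyz' : y' ∈ X ⟨0, by omega⟩ ∧ z' ∈ X ⟨2, by omega⟩ ∧
      ∃ x : Fin p → (Fin n → ZMod p), (∀ i, x i ∈ X i) ∧ ∑ i, x i = 0 ∧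
        x ⟨0, by omega⟩ = y' ∧ x ⟨2, by omega⟩ = z')
    (hne : (y, z) ≠ (y', z')) :
    y + z ≠ y' + z' := by
  intro hsum
  obtain ⟨-, -, x, hx, hxsum, rfl, rfl⟩ := hyz
  obtain ⟨hy', hz', -⟩ := hyz'
  obtain ⟨rfl, rfl⟩ := eq_of_add_eq_of_forall_cycle_apply_eq X
    (by simp [Fin.ext_iff]) (by simp [Fin.ext_iff]) (by simp [Fin.ext_iff]) hX hx hxsum hy' hz'
    hsum.symm
  exact hne rfl
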